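/- Let T be a tree with graph metric d, let γ : ℤ → V(T) be a bi-infinite geodesic (d(γ(m), γ(n)) = |m − n| for all m, n ∈ ℤ), and let S be a cobounded subtree of T (S is a nonempty set of vertices whose induced subgraph is connected, and there is r ≥ 0 such that every vertex of T lies within distance r of S). Then γ(n) ∈ S for every n ∈ ℤ. -/

import Mathlib

variable {V : Type*}

/-- A bi-infinite geodesic in a graph: a map `γ : ℤ → V` such that the graph distance
between `γ m` and `γ n` is `|m - n|`. -/
def IsBiInfGeodesic (T : SimpleGraph V) (γ : ℤ → V) : Prop :=
  ∀ m n : ℤ, T.dist (γ m) (γ n) = (m - n).natAbs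

/-- A set of vertices is cobounded if every vertex lies within a uniformly bounded graph
distance of it. -/
def IsCoboundedVertexSet (T : SimpleGraph V) (S : Set V) : Prop :=
  ∃ r : ℕ, ∀ v : V, ∃ s ∈ S, T.dist v s ≤ r

/-- A subtree: a (nonempty) set of vertices whose induced subgraph is connected. -/
def IsSubtree (T : SimpleGraph V) (S : Set V) : Prop :=
  (T.induce S).Connected

/-!
Fix `γ n` and go `r + 1` steps along the axis in both directions, to `a` and `b`, where `r` is
the coboundedness constant of `S`. Joining `a` to a nearest point of `S`, then inside `S` to a
point of `S` near `b`, and then to `b` gives a walk from `a` to `b`. In a tree every walk from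
`a` to `b` passes through every vertex between them, in particular through `γ n`; the two
short connecting walks are too short to reach `γ n`, so it is met inside `S`.
-/

namespace SimpleGraph

variable {G : SimpleGraph V} {u v w : V}

lemma Walk.dist_le_length_of_mem_support (p : G.Walk u w) (hv : v ∈ p.support) :
    G.dist u v ≤ p.length := by
  classical exact (dist_le _).trans (p.length_takeUntil_le_length hv)

lemma Walk.dist_le_length_of_mem_support' (p : G.Walk u w) (hv : v ∈ p.support) :
    G.dist v w ≤ p.length := by
  classical exact (dist_le _).trans (p.length_dropUntil_le_length hv)

lemma IsAcyclic.mem_support_of_dist_add_dist_eq (hG : G.IsAcyclic) (huv : G.Reachable u v)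
    (hvw : G.Reachable v w) (h : G.dist u v + G.dist v w = G.dist u w) (p : G.Walk u w) :
    v ∈ p.support := by
  classical
  obtain ⟨q₁, hq₁⟩ := huv.exists_walk_length_eq_dist
  obtain ⟨q₂, hq₂⟩ := hvw.exists_walk_length_eq_dist
  have hq : (q₁.append q₂).IsPath :=
    Walk.isPath_of_length_eq_dist _ (by rw [Walk.length_append, hq₁, hq₂, h])
  -- a geodesic through `v` is a path, and paths in an acyclic graph are unique
  have hbypass : q₁.append q₂ = p.bypass :=
    congrArg Subtype.val ((hG.subsingleton_path u w).elim ⟨_, hq⟩ p.toPath)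
  apply p.support_bypass_subset_support
  rw [← hbypass, Walk.mem_support_append_iff]
  exact Or.inl q₁.end_mem_support

lemma Preconnected.exists_walk_support_subset {S : Set V} (hS : (G.induce S).Preconnected)
    (hu : u ∈ S) (hw : w ∈ S) : ∃ p : G.Walk u w, ∀ x ∈ p.support, x ∈ S := by
  obtain ⟨p⟩ := hS ⟨u, hu⟩ ⟨w, hw⟩
  have hsupp : ∀ x ∈ (p.map (Embedding.induce S).toHom).support, x ∈ S := by
    simp only [Walk.support_map, List.mem_map]
    rintro _ ⟨y, -, rfl⟩
    exact y.2
  exact ⟨_, hsupp⟩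

lemma IsTree.mem_of_dist_add_dist_eq (hG : G.IsTree) {S : Set V}
    (hS : (G.induce S).Preconnected) (h : G.dist u v + G.dist v w = G.dist u w)
    {s₁ s₂ : V} (hs₁ : s₁ ∈ S) (hs₂ : s₂ ∈ S) (hus₁ : G.dist u s₁ < G.dist u v)
    (hs₂w : G.dist s₂ w < G.dist v w) : v ∈ S := by
  obtain ⟨p, hp⟩ := (hG.connected u s₁).exists_walk_length_eq_dist
  obtain ⟨pS, hpS⟩ := hS.exists_walk_support_subset hs₁ hs₂
  obtain ⟨q, hq⟩ := (hG.connected s₂ w).exists_walk_length_eq_dist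
  have hv := hG.isAcyclic.mem_support_of_dist_add_dist_eq (hG.connected u v)
    (hG.connected v w) h ((p.append pS).append q)
  simp only [Walk.mem_support_append_iff] at hv
  rcases hv with (hvp | hvpS) | hvq
  · exact absurd (p.dist_le_length_of_mem_support hvp) (by omega)
  · exact hpS v hvpS
  · exact absurd (q.dist_le_length_of_mem_support' hvq) (by omega)

end SimpleGraph

/-- **Key step in the proof of Lemma `tprime`.** In a tree, every bi-infinite geodesic is
contained in every cobounded subtree. -/
theorem axis_subset_cobounded_subtree (T : SimpleGraph V) (htree : T.IsTree)
    (γ : ℤ → V) (hγ : IsBiInfGeodesic T γ)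
    (S : Set V) (hsub : IsSubtree T S) (hcob : IsCoboundedVertexSet T S) :
    ∀ n : ℤ, γ n ∈ S := by
  obtain ⟨r, hr⟩ := hcob
  intro n
  have hleft := hγ (n - (r + 1)) n
  have hright := hγ n (n + (r + 1))
  have hspan := hγ (n - (r + 1)) (n + (r + 1))
  obtain ⟨s₁, hs₁, hds₁⟩ := hr (γ (n - (r + 1)))
  obtain ⟨s₂, hs₂, hds₂⟩ := hr (γ (n + (r + 1)))
  rw [SimpleGraph.dist_comm] at hds₂
  exact htree.mem_of_dist_add_dist_eq (u := γ (n - (r + 1))) (w := γ (n + (r + 1)))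
    hsub.preconnected (by omega) hs₁ hs₂ (by omega) (by omega)
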